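/- Let N ≥ 1, let K be a nonempty subset of ℒ(𝒳^N) and let P : K → ℝ. Define H := {MuHy^N(f|·) : f ∈ K} ⊆ ℒ(𝒩^N), and for g ∈ H define Q(g) := sup{P(f) : f ∈ K, MuHy^N(f|·) = g} ∈ ℝ ∪ {+∞}. Then there exists a coherent exchangeable lower prevision on ℒ(𝒳^N) that dominates P on K (i.e., whose value at every f ∈ K is ≥ P(f)) if and only if Q is real-valued on H and avoids sure loss, i.e., for every n ≥ 0, all g₁,…,g_n ∈ H and all real λ₁,…,λ_n ≥ 0: max_{m∈𝒩^N} Σ_{k=1}^n λ_k (g_k(m) − Q(g_k)) ≥ 0. -/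

import Mathlib

open Finset Filter Topology

/-- A coherent lower prevision on the gambles over a finite nonempty space `Ω`. -/
def LowerPrevCoherent {Ω : Type*} [Fintype Ω] [Nonempty Ω] (P : (Ω → ℝ) → ℝ) : Prop :=
  (∀ f : Ω → ℝ, sInf (Set.range f) ≤ P f) ∧
  (∀ (f : Ω → ℝ) (l : ℝ), 0 ≤ l → P (fun ω => l * f ω) = l * P f) ∧
  (∀ f g : Ω → ℝ, P f + P g ≤ P (f + g))

/-- A linear prevision on the gambles over a finite nonempty space `Ω`. -/
def LinearPrevision {Ω : Type*} [Fintype Ω] [Nonempty Ω] (P : (Ω → ℝ) → ℝ) : Prop :=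
  (∀ f g : Ω → ℝ, P (f + g) = P f + P g) ∧
  (∀ (l : ℝ) (f : Ω → ℝ), P (fun ω => l * f ω) = l * P f) ∧
  (∀ f : Ω → ℝ, (∀ ω, 0 ≤ f ω) → 0 ≤ P f) ∧
  P (fun _ => 1) = 1

/-- Exchangeability of a lower prevision on gambles on `X^N`:
`P (πf − f) ≥ 0` for every gamble `f` and every permutation `π`. -/
def Exchangeable {X : Type*} {N : ℕ} (P : ((Fin N → X) → ℝ) → ℝ) : Prop :=
  ∀ (f : (Fin N → X) → ℝ) (π : Equiv.Perm (Fin N)),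
    0 ≤ P (fun x => f (fun k => x (π k)) - f x)

/-- The set of count vectors `𝒩^n`. -/
abbrev CVec (X : Type*) [Fintype X] (n : ℕ) : Type _ := {m : X → ℕ // ∑ x, m x = n}

noncomputable instance {X : Type*} [Fintype X] [DecidableEq X] (n : ℕ) : Fintype (CVec X n) := by
  have key : ∀ (m : CVec X n) (x : X), m.1 x < n + 1 := by
    intro m x
    have h1 : m.1 x ≤ ∑ y, m.1 y :=
      Finset.single_le_sum (fun i _ => Nat.zero_le _) (Finset.mem_univ x)
    have h2 := m.2
    omega
  exact Fintype.ofInjective (fun m : CVec X n => fun x => (⟨m.1 x, key m x⟩ : Fin (n+1)))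
    (fun a b hab => Subtype.ext (funext fun x => congrArg Fin.val (congrFun hab x)))

instance {X : Type*} [Fintype X] [DecidableEq X] [Nonempty X] (n : ℕ) :
    Nonempty (CVec X n) :=
  ⟨⟨fun x => if x = Classical.arbitrary X then n else 0, by simp⟩⟩

/-- The counting map `T^n : X^n → 𝒩^n`. -/
def countMap {X : Type*} [Fintype X] [DecidableEq X] (n : ℕ) (z : Fin n → X) : CVec X n :=
  ⟨fun x => (Finset.univ.filter fun k => z k = x).card, by
    have h := Finset.card_eq_sum_card_fiberwise (f := z) (s := Finset.univ) (t := Finset.univ)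
      (fun k _ => Finset.mem_univ (z k))
    simpa using h.symm⟩

/-- `ν(m) = n!/∏ₓ mₓ!` for a count vector `m ∈ 𝒩^n`. -/
def nu {X : Type*} [Fintype X] {n : ℕ} (m : CVec X n) : ℕ :=
  Nat.multinomial Finset.univ m.1

/-- `ν(μ − m)`, which is `0` unless `m ≤ μ` componentwise. -/
def nuSub {X : Type*} [Fintype X] {n k : ℕ} (μ : CVec X (n + k)) (m : CVec X n) : ℕ :=
  if ∀ x, m.1 x ≤ μ.1 x then Nat.multinomial Finset.univ (fun x => μ.1 x - m.1 x) else 0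

/-- The multiple hyper-geometric prevision `MuHy^n(f|m) = (1/ν(m)) ∑_{z∈[m]} f(z)`. -/
noncomputable def MuHy {X : Type*} [Fintype X] [DecidableEq X] {n : ℕ}
    (f : (Fin n → X) → ℝ) (m : CVec X n) : ℝ :=
  (∑ z ∈ Finset.univ.filter fun z : Fin n → X => countMap n z = m, f z) / (nu m : ℝ)

/-- The `X`-simplex `Σ_X`, as a subtype of `X → ℝ`. -/
abbrev SimplexPt (X : Type*) [Fintype X] : Type _ :=
  {θ : X → ℝ // (∀ x, 0 ≤ θ x) ∧ ∑ x, θ x = 1}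

/-- The Bernstein basis polynomial `B_m(θ) = ν(m) ∏ₓ θₓ^{mₓ}`. -/
noncomputable def Bern {X : Type*} [Fintype X] {n : ℕ} (m : CVec X n) (θ : X → ℝ) : ℝ :=
  (nu m : ℝ) * ∏ x, θ x ^ m.1 x

/-- The count multinomial expectation `CoMn^n(g|θ) = ∑_m g(m) B_m(θ)`. -/
noncomputable def CoMn {X : Type*} [Fintype X] [DecidableEq X] {n : ℕ} (g : CVec X n → ℝ) (θ : X → ℝ) : ℝ :=
  ∑ m : CVec X n, g m * Bern m θ

/-- The multinomial expectation `Mn^n(f|θ) = ∑_z f(z) ∏ₓ θₓ^{Tₓ(z)}`. -/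
noncomputable def Mn {X : Type*} [Fintype X] [DecidableEq X] {n : ℕ}
    (f : (Fin n → X) → ℝ) (θ : X → ℝ) : ℝ :=
  ∑ z : Fin n → X, f z * ∏ x, θ x ^ (countMap n z).1 x

/-- `CoMn^n(g|·)` as a function on the simplex. -/
noncomputable def CoMnP {X : Type*} [Fintype X] [DecidableEq X] {n : ℕ} (g : CVec X n → ℝ)
    (θ : SimplexPt X) : ℝ :=
  CoMn g θ.1

/-- `Mn^n(f|·)` as a function on the simplex. -/
noncomputable def MnP {X : Type*} [Fintype X] [DecidableEq X] {n : ℕ}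
    (f : (Fin n → X) → ℝ) (θ : SimplexPt X) : ℝ :=
  Mn f θ.1

/-- Polynomial gambles on the simplex: the set `𝒱(Σ_X)`. -/
def IsPolyGamble {X : Type*} [Fintype X] [DecidableEq X] (p : SimplexPt X → ℝ) : Prop :=
  ∃ n : ℕ, 1 ≤ n ∧ ∃ g : CVec X n → ℝ, p = fun θ => CoMnP g θ

/-- Coherence of a functional on the linear space `𝒱(Σ_X)` of polynomial gambles. -/
def CoherentOnPoly {X : Type*} [Fintype X] [DecidableEq X] (S : (SimplexPt X → ℝ) → ℝ) : Prop :=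
  (∀ p, IsPolyGamble p → sInf (Set.range p) ≤ S p) ∧
  (∀ p, IsPolyGamble p → ∀ l : ℝ, 0 ≤ l → S (fun θ => l * p θ) = l * S p) ∧
  (∀ p q, IsPolyGamble p → IsPolyGamble q → S p + S q ≤ S (p + q))

/-- Cylindrical extension of a gamble on `X^n` to `X^{n+k}`. -/
def cylExt {X : Type*} {n k : ℕ} (f : (Fin n → X) → ℝ) : (Fin (n + k) → X) → ℝ :=
  fun z => f fun i => z (Fin.castLE (Nat.le_add_right n k) i)

/-- Time consistency of a family of lower previsions on the `X^n`. -/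
def PTimeConsistent {X : Type*} (P : ∀ n : ℕ, ((Fin n → X) → ℝ) → ℝ) : Prop :=
  ∀ n : ℕ, 1 ≤ n → ∀ (k : ℕ) (f : (Fin n → X) → ℝ), P n f = P (n + k) (cylExt f)

/-- Time consistency of a family of count lower previsions on the `𝒩^n`. -/
def QTimeConsistent {X : Type*} [Fintype X] [DecidableEq X] (Q : ∀ n : ℕ, (CVec X n → ℝ) → ℝ) : Prop :=
  ∀ n : ℕ, 1 ≤ n → ∀ (k : ℕ) (h : CVec X n → ℝ),
    Q n h = Q (n + k) (fun μ => ∑ m : CVec X n, ((nuSub μ m : ℝ) * (nu m : ℝ) / (nu μ : ℝ)) * h m)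

/-- The relative frequency vector `m/n ∈ Σ_X` of a count vector `m ∈ 𝒩^n`, `n ≥ 1`. -/
noncomputable def freqPt {X : Type*} [Fintype X] {n : ℕ} (hn : 0 < n) (m : CVec X n) :
    SimplexPt X :=
  ⟨fun x => (m.1 x : ℝ) / n,
   fun x => div_nonneg (Nat.cast_nonneg _) (Nat.cast_nonneg _),
   by
    rw [← Finset.sum_div]
    have h : (∑ x, (m.1 x : ℝ)) = (n : ℝ) := by exact_mod_cast m.2
    rw [h]
    exact div_self (Nat.cast_ne_zero.mpr hn.ne')⟩

/-- `ḡ(μ) = ∑_m (ν(m) ν(μ−m) / ν(μ)) g(m)`. -/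
noncomputable def gbar {X : Type*} [Fintype X] [DecidableEq X] {n k : ℕ}
    (g : CVec X n → ℝ) (μ : CVec X (n + k)) : ℝ :=
  ∑ m : CVec X n, ((nu m : ℝ) * (nuSub μ m : ℝ) / (nu μ : ℝ)) * g m

/-!
Symmetrising over all permutations shows that a coherent exchangeable `E` satisfies
`E f ≤ E (MuHy f ∘ T)`, so `g ↦ E (g ∘ T)` is a coherent lower prevision on count gambles that
dominates `Q` on `H`; hence `Q` is finite and avoids sure loss. Conversely, if `Q` avoids sure
loss, its natural extension is coherent and dominates `Q` on `H`; composing it with the linear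
map `f ↦ MuHy f`, which kills `πf - f` and preserves lower bounds (because `|[m]| = ν(m)`),
gives the required exchangeable lower prevision.
-/
namespace LowerPrevCoherent

variable {Ω : Type*} [Fintype Ω] [Nonempty Ω] {E : (Ω → ℝ) → ℝ}

theorem le_apply (hE : LowerPrevCoherent E) {c : ℝ} {f : Ω → ℝ} (hc : ∀ ω, c ≤ f ω) :
    c ≤ E f :=
  (le_csInf (Set.range_nonempty f) (Set.forall_mem_range.2 hc)).trans (hE.1 f)

theorem map_zero (hE : LowerPrevCoherent E) : E 0 = 0 := by
  simpa [Pi.zero_def] using hE.2.1 0 0 le_rfl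

theorem map_smul (hE : LowerPrevCoherent E) {l : ℝ} (hl : 0 ≤ l) (f : Ω → ℝ) :
    E (l • f) = l * E f :=
  hE.2.1 f l hl

theorem apply_le (hE : LowerPrevCoherent E) {c : ℝ} {f : Ω → ℝ} (hc : ∀ ω, f ω ≤ c) :
    E f ≤ c := by
  have hneg : -c ≤ E (-f) := hE.le_apply fun ω => neg_le_neg (hc ω)
  have hsum := hE.2.2 f (-f)
  rw [add_neg_cancel, hE.map_zero] at hsum
  linarith

theorem sum_le (hE : LowerPrevCoherent E) {ι : Type*} (s : Finset ι) (F : ι → Ω → ℝ) :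
    ∑ i ∈ s, E (F i) ≤ E (∑ i ∈ s, F i) := by
  classical
  induction s using Finset.cons_induction with
  | empty => simp [hE.map_zero]
  | cons a s ha ih =>
    rw [Finset.sum_cons, Finset.sum_cons]
    linarith [hE.2.2 (F a) (∑ i ∈ s, F i)]

theorem comp_linearMap {Ω' : Type*} [Fintype Ω'] [Nonempty Ω'] (hE : LowerPrevCoherent E)
    (L : (Ω' → ℝ) →ₗ[ℝ] (Ω → ℝ)) (hL : ∀ f c, (∀ ω', c ≤ f ω') → ∀ ω, c ≤ L f ω) :
    LowerPrevCoherent (E ∘ L) := by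
  refine ⟨fun f => ?_, fun f l hl => ?_, fun f g => ?_⟩
  · exact hE.le_apply <|
      hL f _ fun ω' => csInf_le (Set.finite_range f).bddBelow ⟨ω', rfl⟩
  · exact (congrArg E (L.map_smul l f)).trans (hE.2.1 (L f) l hl)
  · simpa only [Function.comp_apply, map_add] using hE.2.2 (L f) (L g)

end LowerPrevCoherent

section NaturalExtension

variable {Ω : Type*}

def AvoidsSureLoss (Q : (Ω → ℝ) → ℝ) (H : Set (Ω → ℝ)) : Prop :=
  ∀ (n : ℕ) (gs : Fin n → Ω → ℝ) (lam : Fin n → ℝ), (∀ i, gs i ∈ H) → (∀ i, 0 ≤ lam i) →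
    ∃ ω, 0 ≤ ∑ i, lam i * (gs i ω - Q (gs i))

theorem LowerPrevCoherent.avoidsSureLoss [Fintype Ω] [Nonempty Ω] {E Q : (Ω → ℝ) → ℝ}
    {H : Set (Ω → ℝ)} (hE : LowerPrevCoherent E) (hQE : ∀ g ∈ H, Q g ≤ E g) :
    AvoidsSureLoss Q H := by
  intro n gs lam hgs hlam
  set F : Ω → ℝ := ∑ i, lam i • gs i
  obtain ⟨ω₀, hω₀⟩ := Finite.exists_max F
  refine ⟨ω₀, ?_⟩
  have hQF : ∑ i, lam i * Q (gs i) ≤ E F :=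
    calc ∑ i, lam i * Q (gs i)
        ≤ ∑ i, E (lam i • gs i) := Finset.sum_le_sum fun i _ => by
          rw [hE.map_smul (hlam i)]
          exact mul_le_mul_of_nonneg_left (hQE _ (hgs i)) (hlam i)
      _ ≤ E F := hE.sum_le _ _
  have hFω₀ : E F ≤ ∑ i, lam i * gs i ω₀ := by
    simpa [F, Finset.sum_apply] using hE.apply_le hω₀
  simp only [mul_sub, Finset.sum_sub_distrib]
  linarith

def buyingPrices (Q : (Ω → ℝ) → ℝ) (H : Set (Ω → ℝ)) (h : Ω → ℝ) : Set ℝ :=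
  {r | ∃ (n : ℕ) (gs : Fin n → Ω → ℝ) (lam : Fin n → ℝ), (∀ i, gs i ∈ H) ∧ (∀ i, 0 ≤ lam i) ∧
    ∀ ω, r + ∑ i, lam i * (gs i ω - Q (gs i)) ≤ h ω}

noncomputable def naturalExtension (Q : (Ω → ℝ) → ℝ) (H : Set (Ω → ℝ)) (h : Ω → ℝ) : ℝ :=
  sSup (buyingPrices Q H h)

variable {Q : (Ω → ℝ) → ℝ} {H : Set (Ω → ℝ)}

theorem mem_buyingPrices_of_forall_le {h : Ω → ℝ} {c : ℝ} (hc : ∀ ω, c ≤ h ω) :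
    c ∈ buyingPrices Q H h :=
  ⟨0, Fin.elim0, Fin.elim0, fun i => i.elim0, fun i => i.elim0, by simpa using hc⟩

theorem mem_buyingPrices_self {g : Ω → ℝ} (hg : g ∈ H) : Q g ∈ buyingPrices Q H g :=
  ⟨1, fun _ => g, fun _ => 1, fun _ => hg, fun _ => zero_le_one, by simp⟩

theorem smul_mem_buyingPrices {h : Ω → ℝ} {r l : ℝ} (hl : 0 ≤ l)
    (hr : r ∈ buyingPrices Q H h) : l * r ∈ buyingPrices Q H (l • h) := by
  obtain ⟨n, gs, lam, hgs, hlam, hle⟩ := hr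
  refine ⟨n, gs, fun i => l * lam i, hgs, fun i => mul_nonneg hl (hlam i), fun ω => ?_⟩
  have := mul_le_mul_of_nonneg_left (hle ω) hl
  simp only [Pi.smul_apply, smul_eq_mul, mul_add, Finset.mul_sum] at this ⊢
  simpa only [mul_assoc] using this

theorem add_mem_buyingPrices {f g : Ω → ℝ} {r s : ℝ} (hr : r ∈ buyingPrices Q H f)
    (hs : s ∈ buyingPrices Q H g) : r + s ∈ buyingPrices Q H (f + g) := by
  obtain ⟨n, gs, lam, hgs, hlam, hle⟩ := hr
  obtain ⟨n', gs', lam', hgs', hlam', hle'⟩ := hs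
  refine ⟨n + n', Fin.append gs gs', Fin.append lam lam', Fin.addCases (by simpa) (by simpa),
    Fin.addCases (by simpa) (by simpa), fun ω => ?_⟩
  simp only [Fin.sum_univ_add, Fin.append_left, Fin.append_right, Pi.add_apply]
  linarith [hle ω, hle' ω]

theorem nonempty_buyingPrices [Finite Ω] (h : Ω → ℝ) : (buyingPrices Q H h).Nonempty := by
  obtain ⟨b, hb⟩ := (Set.finite_range h).bddBelow
  exact ⟨b, mem_buyingPrices_of_forall_le fun ω => hb ⟨ω, rfl⟩⟩

namespace AvoidsSureLoss

theorem exists_le_of_mem_buyingPrices (hQ : AvoidsSureLoss Q H) {h : Ω → ℝ} {r : ℝ}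
    (hr : r ∈ buyingPrices Q H h) : ∃ ω, r ≤ h ω := by
  obtain ⟨n, gs, lam, hgs, hlam, hle⟩ := hr
  obtain ⟨ω, hω⟩ := hQ n gs lam hgs hlam
  exact ⟨ω, by linarith [hle ω]⟩

theorem bddAbove_buyingPrices [Finite Ω] (hQ : AvoidsSureLoss Q H) (h : Ω → ℝ) :
    BddAbove (buyingPrices Q H h) := by
  obtain ⟨M, hM⟩ := (Set.finite_range h).bddAbove
  refine ⟨M, fun r hr => ?_⟩
  obtain ⟨ω, hω⟩ := hQ.exists_le_of_mem_buyingPrices hr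
  exact hω.trans (hM ⟨ω, rfl⟩)

theorem le_naturalExtension [Finite Ω] (hQ : AvoidsSureLoss Q H) {h : Ω → ℝ} {r : ℝ}
    (hr : r ∈ buyingPrices Q H h) : r ≤ naturalExtension Q H h :=
  le_csSup (hQ.bddAbove_buyingPrices h) hr

theorem naturalExtension_le [Finite Ω] (hQ : AvoidsSureLoss Q H) {h : Ω → ℝ} {c : ℝ}
    (hc : ∀ ω, h ω ≤ c) : naturalExtension Q H h ≤ c := by
  refine csSup_le (nonempty_buyingPrices h) fun r hr => ?_
  obtain ⟨ω, hω⟩ := hQ.exists_le_of_mem_buyingPrices hr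
  exact hω.trans (hc ω)

theorem mul_naturalExtension_le [Finite Ω] (hQ : AvoidsSureLoss Q H) {l : ℝ} (hl : 0 ≤ l)
    (h : Ω → ℝ) : l * naturalExtension Q H h ≤ naturalExtension Q H (l • h) := by
  rw [naturalExtension, ← smul_eq_mul, ← Real.sSup_smul_of_nonneg hl]
  refine csSup_le (nonempty_buyingPrices h).smul_set ?_
  rintro _ ⟨r, hr, rfl⟩
  exact hQ.le_naturalExtension (smul_mem_buyingPrices hl hr)

theorem naturalExtension_coherent [Fintype Ω] [Nonempty Ω] (hQ : AvoidsSureLoss Q H) :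
    LowerPrevCoherent (naturalExtension Q H) := by
  refine ⟨fun h => ?_, fun h l hl => ?_, fun f g => ?_⟩
  · exact hQ.le_naturalExtension
      (mem_buyingPrices_of_forall_le fun ω => csInf_le (Set.finite_range h).bddBelow ⟨ω, rfl⟩)
  · change naturalExtension Q H (l • h) = l * naturalExtension Q H h
    rcases hl.eq_or_lt with rfl | hl
    · rw [zero_smul, zero_mul]
      exact le_antisymm (hQ.naturalExtension_le fun _ => le_rfl)
        (hQ.le_naturalExtension (mem_buyingPrices_of_forall_le fun _ => le_rfl))
    · refine le_antisymm ?_ (hQ.mul_naturalExtension_le hl.le h)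
      have := hQ.mul_naturalExtension_le (inv_nonneg.2 hl.le) (l • h)
      rw [inv_smul_smul₀ hl.ne'] at this
      rwa [inv_mul_le_iff₀ hl] at this
  · rw [naturalExtension, naturalExtension, ← csSup_add (nonempty_buyingPrices f)
      (hQ.bddAbove_buyingPrices f) (nonempty_buyingPrices g) (hQ.bddAbove_buyingPrices g)]
    refine csSup_le ((nonempty_buyingPrices f).add (nonempty_buyingPrices g)) ?_
    rintro _ ⟨r, hr, s, hs, rfl⟩
    exact hQ.le_naturalExtension (add_mem_buyingPrices hr hs)

end AvoidsSureLoss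

end NaturalExtension

section Counting

open Nat

variable {X : Type*} [Fintype X] [DecidableEq X] {n : ℕ}

theorem card_subtype_apply_eq (z : Fin n → X) (x : X) :
    Fintype.card {k // z k = x} = (countMap n z).1 x := by
  rw [Fintype.card_subtype]
  rfl

theorem countMap_comp_perm (z : Fin n → X) (π : Equiv.Perm (Fin n)) :
    countMap n (z ∘ π) = countMap n z :=
  Subtype.ext <| funext fun x => by
    rw [← card_subtype_apply_eq, ← card_subtype_apply_eq]
    exact Fintype.card_congr (π.subtypeEquiv fun _ => Iff.rfl)

theorem countMap_surjective : Function.Surjective (countMap (X := X) n) := by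
  intro m
  have hcard : Fintype.card (Σ x, Fin (m.1 x)) = n := by simp [m.2]
  let e := (Fintype.equivFinOfCardEq hcard).symm
  refine ⟨fun k => (e k).1, Subtype.ext <| funext fun x => ?_⟩
  rw [← card_subtype_apply_eq, ← Fintype.card_fin (m.1 x)]
  exact Fintype.card_congr ((e.subtypeEquiv fun _ => Iff.rfl).trans (Equiv.sigmaSubtype x))

theorem exists_perm_comp_eq_of_countMap_eq {z z' : Fin n → X}
    (h : countMap n z = countMap n z') : ∃ π : Equiv.Perm (Fin n), z ∘ π = z' := by
  have e : ∀ x, {k // z' k = x} ≃ {k // z k = x} := fun x =>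
    Fintype.equivOfCardEq <| by rw [card_subtype_apply_eq, card_subtype_apply_eq, h]
  exact ⟨(Equiv.sigmaFiberEquiv z').symm.trans ((Equiv.sigmaCongrRight e).trans
    (Equiv.sigmaFiberEquiv z)), funext fun k => (e (z' k) ⟨k, rfl⟩).2⟩

theorem card_filter_comp_perm_eq {z z' : Fin n → X} (h : countMap n z = countMap n z') :
    #{π : Equiv.Perm (Fin n) | z ∘ π = z'} = ∏ x, ((countMap n z).1 x)! := by
  obtain ⟨π₀, rfl⟩ := exists_perm_comp_eq_of_countMap_eq h
  have e : {π : Equiv.Perm (Fin n) // z ∘ π = z ∘ π₀} ≃ {π : Equiv.Perm (Fin n) // z ∘ π = z} :=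
    (Equiv.mulRight π₀⁻¹).subtypeEquiv fun π => by
      rw [Equiv.coe_mulRight, Equiv.Perm.coe_mul, ← Function.comp_assoc, Equiv.Perm.coe_inv,
        Equiv.comp_symm_eq, eq_comm]
  rw [← Fintype.card_subtype, Fintype.card_congr e, DomMulAct.stabilizer_card]
  simp only [card_subtype_apply_eq]

theorem sum_perm_comp {M : Type*} [AddCommMonoid M] (f : (Fin n → X) → M) (z : Fin n → X) :
    ∑ π : Equiv.Perm (Fin n), f (z ∘ π) =
      (∏ x, ((countMap n z).1 x)!) • ∑ z' with countMap n z' = countMap n z, f z' := by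
  rw [Finset.smul_sum,
    ← Finset.sum_fiberwise_of_maps_to (g := fun π : Equiv.Perm (Fin n) => z ∘ π)
    (t := {z' | countMap n z' = countMap n z}) (fun π _ => by simp [countMap_comp_perm])]
  refine Finset.sum_congr rfl fun z' hz' => ?_
  rw [Finset.sum_congr rfl fun π hπ => by rw [(Finset.mem_filter.1 hπ).2], Finset.sum_const,
    card_filter_comp_perm_eq (Finset.mem_filter.1 hz').2.symm]

theorem card_filter_countMap_eq (m : CVec X n) : #{z | countMap n z = m} = nu m := by
  obtain ⟨z, rfl⟩ := countMap_surjective m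
  have hperm := sum_perm_comp (fun _ => 1) z
  have hspec := Nat.multinomial_spec Finset.univ (countMap n z).1
  simp only [Finset.sum_const, Finset.card_univ, Fintype.card_perm, Fintype.card_fin,
    smul_eq_mul, mul_one, (countMap n z).2] at hperm hspec
  exact Nat.eq_of_mul_eq_mul_left (Finset.prod_pos fun x _ => Nat.factorial_pos _)
    (hperm.symm.trans hspec.symm)

end Counting

section MuHy

open Nat

variable {X : Type*} [Fintype X] [DecidableEq X] {n : ℕ}

theorem factorial_mul_MuHy (f : (Fin n → X) → ℝ) (m : CVec X n) :
    (n ! : ℝ) * MuHy f m = (∏ x, (m.1 x)! : ℕ) * ∑ z with countMap n z = m, f z := by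
  have hspec := Nat.multinomial_spec Finset.univ m.1
  rw [m.2] at hspec
  rw [MuHy, ← hspec, Nat.cast_mul, mul_assoc, ← nu,
    mul_div_cancel₀ _ (by exact_mod_cast (Nat.multinomial_pos _ _).ne')]

theorem sum_perm_comp_eq_factorial_mul_MuHy (f : (Fin n → X) → ℝ) (z : Fin n → X) :
    ∑ π : Equiv.Perm (Fin n), f (z ∘ π) = n ! * MuHy f (countMap n z) := by
  rw [sum_perm_comp, factorial_mul_MuHy, nsmul_eq_mul]

theorem le_MuHy {f : (Fin n → X) → ℝ} {c : ℝ} (hc : ∀ z, c ≤ f z) (m : CVec X n) :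
    c ≤ MuHy f m := by
  have hsum := Finset.card_nsmul_le_sum {z | countMap n z = m} f c fun z _ => hc z
  rw [card_filter_countMap_eq, nsmul_eq_mul] at hsum
  exact (le_div_iff₀' (by exact_mod_cast Nat.multinomial_pos _ _)).2 hsum

theorem MuHy_comp_perm (f : (Fin n → X) → ℝ) (π : Equiv.Perm (Fin n)) (m : CVec X n) :
    MuHy (fun z => f (z ∘ π)) m = MuHy f m := by
  rw [MuHy, MuHy, Finset.sum_filter, Finset.sum_filter]
  congr 1
  exact Fintype.sum_equiv (Equiv.arrowCongr π.symm (Equiv.refl X)) _ _ fun z => by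
    change _ = if countMap n (z ∘ π) = m then f (z ∘ π) else 0
    rw [countMap_comp_perm]

variable (X n) in
noncomputable def MuHy.linearMap : ((Fin n → X) → ℝ) →ₗ[ℝ] (CVec X n → ℝ) where
  toFun f m := MuHy f m
  map_add' f g := funext fun m => by
    simp only [MuHy, Pi.add_apply, Finset.sum_add_distrib, add_div]
  map_smul' l f := funext fun m => by
    simp only [MuHy, Pi.smul_apply, smul_eq_mul, ← Finset.mul_sum, mul_div_assoc,
      RingHom.id_apply]

theorem exchangeable_comp_MuHy {F : (CVec X n → ℝ) → ℝ} (hF : F 0 = 0) :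
    Exchangeable (F ∘ MuHy.linearMap X n) := fun f π => by
  have hperm : MuHy.linearMap X n ((fun z => f (z ∘ π)) - f) = 0 := by
    rw [map_sub, sub_eq_zero]
    exact funext (MuHy_comp_perm f π)
  exact (congrArg F hperm).trans hF |>.ge

theorem Exchangeable.le_comp_countMap [Nonempty X] {E : ((Fin n → X) → ℝ) → ℝ}
    (hEx : Exchangeable E) (hE : LowerPrevCoherent E) (f : (Fin n → X) → ℝ) :
    E f ≤ E fun z => MuHy f (countMap n z) := by
  have hperm : ∀ π : Equiv.Perm (Fin n), E f ≤ E fun z => f (z ∘ π) := fun π => by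
    have hexch : 0 ≤ E ((fun z => f (z ∘ π)) - f) := hEx f π
    have hsum := hE.2.2 f ((fun z => f (z ∘ π)) - f)
    rw [add_sub_cancel] at hsum
    linarith
  have hfac : (0 : ℝ) < n ! := by exact_mod_cast Nat.factorial_pos n
  refine le_of_mul_le_mul_left ?_ hfac
  calc (n ! : ℝ) * E f = ∑ π : Equiv.Perm (Fin n), E f := by simp [Fintype.card_perm]
    _ ≤ ∑ π : Equiv.Perm (Fin n), E fun z => f (z ∘ π) := Finset.sum_le_sum fun π _ => hperm π
    _ ≤ E (∑ π : Equiv.Perm (Fin n), fun z => f (z ∘ π)) := hE.sum_le _ _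
    _ = E ((n ! : ℝ) • fun z => MuHy f (countMap n z)) := by
      congr 1
      ext z
      simp [Finset.sum_apply, sum_perm_comp_eq_factorial_mul_MuHy]
    _ = (n ! : ℝ) * E fun z => MuHy f (countMap n z) := hE.map_smul hfac.le _

end MuHy

theorem stmt15_general {X : Type*} [Fintype X] [DecidableEq X] [Nonempty X] {N : ℕ}
    (K : Set ((Fin N → X) → ℝ))
    (P0 : ((Fin N → X) → ℝ) → ℝ)
    (Q : (CVec X N → ℝ) → ℝ)
    (hQ : ∀ g : CVec X N → ℝ,
      Q g = sSup {r : ℝ | ∃ f ∈ K, (fun m => MuHy f m) = g ∧ P0 f = r}) :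
    (∃ E : ((Fin N → X) → ℝ) → ℝ,
        LowerPrevCoherent E ∧ Exchangeable E ∧ ∀ f ∈ K, P0 f ≤ E f) ↔
      ((∀ g : CVec X N → ℝ, (∃ f ∈ K, (fun m => MuHy f m) = g) →
          BddAbove {r : ℝ | ∃ f ∈ K, (fun m => MuHy f m) = g ∧ P0 f = r}) ∧
       ∀ (n : ℕ) (gs : Fin n → (CVec X N → ℝ)) (lam : Fin n → ℝ),
         (∀ i, ∃ f ∈ K, (fun m => MuHy f m) = gs i) → (∀ i, 0 ≤ lam i) →
         ∃ m : CVec X N, 0 ≤ ∑ i, lam i * (gs i m - Q (gs i))) := by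
  let H : Set (CVec X N → ℝ) := {g | ∃ f ∈ K, (fun m => MuHy f m) = g}
  change _ ↔ _ ∧ AvoidsSureLoss Q H
  constructor
  · rintro ⟨E, hE, hEx, hdom⟩
    let T := LinearMap.funLeft ℝ ℝ (countMap (X := X) N)
    have hET := hE.comp_linearMap T fun g c hc z => hc _
    have hP0 : ∀ g, ∀ r ∈ {r : ℝ | ∃ f ∈ K, (fun m => MuHy f m) = g ∧ P0 f = r}, r ≤ E (T g) := by
      rintro g _ ⟨f, hf, rfl, rfl⟩
      exact (hdom f hf).trans (hEx.le_comp_countMap hE f)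
    refine ⟨fun g _ => ⟨_, hP0 g⟩, hET.avoidsSureLoss fun g ⟨f, hf, hfg⟩ => ?_⟩
    rw [hQ]
    exact csSup_le ⟨P0 f, f, hf, hfg, rfl⟩ (hP0 g)
  · rintro ⟨hbdd, hasl⟩
    have hF := hasl.naturalExtension_coherent
    refine ⟨naturalExtension Q _ ∘ MuHy.linearMap X N,
      hF.comp_linearMap _ fun f c hc => le_MuHy hc, ?_, fun f hf => ?_⟩
    · exact exchangeable_comp_MuHy hF.map_zero
    · calc P0 f ≤ Q (fun m => MuHy f m) := by
            rw [hQ]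
            exact le_csSup (hbdd _ ⟨f, hf, rfl⟩) ⟨f, hf, rfl, rfl⟩
        _ ≤ _ := hasl.le_naturalExtension (mem_buyingPrices_self ⟨f, hf, rfl⟩)

/-- existence of a coherent exchangeable lower prevision dominating the
assessments `P₀` on `K` is equivalent to `Q` being real-valued on `H` and avoiding
sure loss. -/
theorem stmt15 {X : Type*} [Fintype X] [DecidableEq X] [Nonempty X] {N : ℕ} (hN : 1 ≤ N)
    (K : Set ((Fin N → X) → ℝ)) (hK : K.Nonempty)
    (P0 : ((Fin N → X) → ℝ) → ℝ)
    (Q : (CVec X N → ℝ) → ℝ)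
    (hQ : ∀ g : CVec X N → ℝ,
      Q g = sSup {r : ℝ | ∃ f ∈ K, (fun m => MuHy f m) = g ∧ P0 f = r}) :
    (∃ E : ((Fin N → X) → ℝ) → ℝ,
        LowerPrevCoherent E ∧ Exchangeable E ∧ ∀ f ∈ K, P0 f ≤ E f) ↔
      ((∀ g : CVec X N → ℝ, (∃ f ∈ K, (fun m => MuHy f m) = g) →
          BddAbove {r : ℝ | ∃ f ∈ K, (fun m => MuHy f m) = g ∧ P0 f = r}) ∧
       ∀ (n : ℕ) (gs : Fin n → (CVec X N → ℝ)) (lam : Fin n → ℝ),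
         (∀ i, ∃ f ∈ K, (fun m => MuHy f m) = gs i) → (∀ i, 0 ≤ lam i) →
         ∃ m : CVec X N, 0 ≤ ∑ i, lam i * (gs i m - Q (gs i))) :=
  stmt15_general K P0 Q hQ
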